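/- arXiv:1411.6720 — 6 statements merged into one kernel-verified Lean document; each statement's English description precedes it below -/
import Mathlib

section
/- Let S21 : ℝ^a × ℝ^b → ℝ and S32 : ℝ^b × ℝ^c → ℝ be C¹ generating functions of thick morphisms ℝ^a ⇢ ℝ^b and ℝ^b ⇢ ℝ^c. Suppose y : ℝ^a × ℝ^c → ℝ^b and q : ℝ^a × ℝ^c → ℝ^b are differentiable maps satisfying, for all (x,r): q(x,r) = ∇_y S32(y(x,r), r) and y(x,r) = ∇_q S21(x, q(x,r)). Define S31 : ℝ^a × ℝ^c → ℝ by S31(x,r) := S32(y(x,r), r) + S21(x, q(x,r)) − ⟨q(x,r), y(x,r)⟩. Then for all (x,r): ∇_x S31(x,r) = ∇_x S21(x, q(x,r)) and ∇_r S31(x,r) = ∇_r S32(y(x,r), r). Consequently the relation Φ_{S31} is contained in the set-theoretic composition Φ_{S32} ∘ Φ_{S21}: for every (x,r), setting z = ∇_r S31(x,r) and p = ∇_x S31(x,r), the point (z, r; y(x,r), q(x,r)) lies in Φ_{S32} and the point (y(x,r), q(x,r); x, p) lies in Φ_{S21}. -/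
open scoped RealInnerProductSpace

/-- Partial gradient of `S : ℝ^a × ℝ^b → ℝ` in the first (source point) variable. -/
noncomputable def gradx {a b : ℕ} (S : EuclideanSpace ℝ (Fin a) × EuclideanSpace ℝ (Fin b) → ℝ)
    (x : EuclideanSpace ℝ (Fin a)) (q : EuclideanSpace ℝ (Fin b)) : EuclideanSpace ℝ (Fin a) :=
  gradient (fun x' => S (x', q)) x

/-- Partial gradient of `S : ℝ^a × ℝ^b → ℝ` in the second (target momentum) variable. -/
noncomputable def gradq {a b : ℕ} (S : EuclideanSpace ℝ (Fin a) × EuclideanSpace ℝ (Fin b) → ℝ)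
    (x : EuclideanSpace ℝ (Fin a)) (q : EuclideanSpace ℝ (Fin b)) : EuclideanSpace ℝ (Fin b) :=
  gradient (fun q' => S (x, q')) q

/-- The formal canonical relation `Φ_S ⊆ T*ℝ^b × T*ℝ^a` determined by a generating
function `S : ℝ^a × ℝ^b → ℝ`:  `(y, q; x, p) ∈ Φ_S ↔ y = ∇_q S(x,q) ∧ p = ∇_x S(x,q)`. -/
def thickRel {a b : ℕ} (S : EuclideanSpace ℝ (Fin a) × EuclideanSpace ℝ (Fin b) → ℝ) :
    Set ((EuclideanSpace ℝ (Fin b) × EuclideanSpace ℝ (Fin b)) ×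
      (EuclideanSpace ℝ (Fin a) × EuclideanSpace ℝ (Fin a))) :=
  {z | z.1.1 = gradq S z.2.1 z.1.2 ∧ z.2.2 = gradx S z.2.1 z.1.2}

/-!
By the chain rule, the variations of `y` and `q` contribute `⟨q, dy⟩` to `dS32` and `⟨y, dq⟩`
to `dS21`, because `q = ∇_y S32` and `y = ∇_q S21`; these are exactly the terms of
`d⟨q, y⟩`, so they cancel in `dS31`, leaving `dS31 = ∂_x S21 dx + ∂_r S32 dr`. Both partial
gradients of `S31` are read off from this total derivative, and the two memberships are then
the coupled system itself.
-/

open ContinuousLinearMap InnerProductSpace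

section PartialGradients

variable {a b : ℕ} {S : EuclideanSpace ℝ (Fin a) × EuclideanSpace ℝ (Fin b) → ℝ}
  {x : EuclideanSpace ℝ (Fin a)} {q : EuclideanSpace ℝ (Fin b)}

theorem HasFDerivAt.gradx_eq {g : EuclideanSpace ℝ (Fin a)} {h : EuclideanSpace ℝ (Fin b)}
    (hS : HasFDerivAt S ((toDual ℝ _ g : _ →L[ℝ] ℝ).coprod (toDual ℝ _ h)) (x, q)) :
    gradx S x q = g := by
  refine HasGradientAt.gradient ((hS.comp x (hasFDerivAt_prodMk_left x q)).congr_fderiv ?_)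
  ext w
  simp

theorem HasFDerivAt.gradq_eq {g : EuclideanSpace ℝ (Fin a)} {h : EuclideanSpace ℝ (Fin b)}
    (hS : HasFDerivAt S ((toDual ℝ _ g : _ →L[ℝ] ℝ).coprod (toDual ℝ _ h)) (x, q)) :
    gradq S x q = h := by
  refine HasGradientAt.gradient ((hS.comp q (hasFDerivAt_prodMk_right x q)).congr_fderiv ?_)
  ext w
  simp

theorem DifferentiableAt.hasFDerivAt_gradx_coprod_gradq (hS : DifferentiableAt ℝ S (x, q)) :
    HasFDerivAt S ((toDual ℝ _ (gradx S x q) : _ →L[ℝ] ℝ).coprod (toDual ℝ _ (gradq S x q)))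
      (x, q) := by
  refine hS.hasFDerivAt.congr_fderiv ?_
  have hx : HasFDerivAt (fun x' => S (x', q)) (fderiv ℝ S (x, q) ∘L inl ℝ _ _) x :=
    hS.hasFDerivAt.comp x (hasFDerivAt_prodMk_left x q)
  have hq : HasFDerivAt (fun q' => S (x, q')) (fderiv ℝ S (x, q) ∘L inr ℝ _ _) q :=
    hS.hasFDerivAt.comp q (hasFDerivAt_prodMk_right x q)
  ext w <;> simp [gradx, gradq, toDual_gradient, hx.fderiv, hq.fderiv]

end PartialGradients

noncomputable def compositeGeneratingFunction {a b c : ℕ}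
    (S32 : EuclideanSpace ℝ (Fin b) × EuclideanSpace ℝ (Fin c) → ℝ)
    (S21 : EuclideanSpace ℝ (Fin a) × EuclideanSpace ℝ (Fin b) → ℝ)
    (y q : EuclideanSpace ℝ (Fin a) × EuclideanSpace ℝ (Fin c) → EuclideanSpace ℝ (Fin b))
    (p : EuclideanSpace ℝ (Fin a) × EuclideanSpace ℝ (Fin c)) : ℝ :=
  S32 (y p, p.2) + S21 (p.1, q p) - ⟪q p, y p⟫

theorem hasFDerivAt_compositeGeneratingFunction {a b c : ℕ}
    {S21 : EuclideanSpace ℝ (Fin a) × EuclideanSpace ℝ (Fin b) → ℝ}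
    {S32 : EuclideanSpace ℝ (Fin b) × EuclideanSpace ℝ (Fin c) → ℝ}
    {y q : EuclideanSpace ℝ (Fin a) × EuclideanSpace ℝ (Fin c) → EuclideanSpace ℝ (Fin b)}
    {p : EuclideanSpace ℝ (Fin a) × EuclideanSpace ℝ (Fin c)}
    (hS21 : DifferentiableAt ℝ S21 (p.1, q p)) (hS32 : DifferentiableAt ℝ S32 (y p, p.2))
    (hy : DifferentiableAt ℝ y p) (hq : DifferentiableAt ℝ q p)
    (hsys1 : q p = gradx S32 (y p) p.2) (hsys2 : y p = gradq S21 p.1 (q p)) :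
    HasFDerivAt (compositeGeneratingFunction S32 S21 y q)
      ((toDual ℝ _ (gradx S21 p.1 (q p)) : _ →L[ℝ] ℝ).coprod (toDual ℝ _ (gradq S32 (y p) p.2)))
      p := by
  have h32 := hS32.hasFDerivAt_gradx_coprod_gradq.comp p (hy.hasFDerivAt.prodMk hasFDerivAt_snd)
  have h21 := hS21.hasFDerivAt_gradx_coprod_gradq.comp p (hasFDerivAt_fst.prodMk hq.hasFDerivAt)
  have hqy := hq.hasFDerivAt.inner ℝ hy.hasFDerivAt
  refine ((h32.add h21).sub hqy).congr_fderiv ?_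
  rw [← hsys1, ← hsys2]
  refine ContinuousLinearMap.ext fun v => ?_
  simp only [sub_apply, add_apply, comp_apply, ContinuousLinearMap.prod_apply, coe_snd',
    coe_fst', coprod_apply, toDual_apply_apply, fderivInnerCLM_apply, real_inner_comm]
  ring

/-- Composition of thick morphisms: the generating function
`S31 = S32 + S21 − ⟨q, y⟩` of the composite satisfies `∇_x S31 = ∇_x S21` and
`∇_r S31 = ∇_r S32` at the solution of the coupled system, and the relation it
generates is contained in the set-theoretic composition of the two relations. -/
theorem thick_composition {a b c : ℕ}
    (S21 : EuclideanSpace ℝ (Fin a) × EuclideanSpace ℝ (Fin b) → ℝ)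
    (S32 : EuclideanSpace ℝ (Fin b) × EuclideanSpace ℝ (Fin c) → ℝ)
    (hS21 : ContDiff ℝ 1 S21) (hS32 : ContDiff ℝ 1 S32)
    (y q : EuclideanSpace ℝ (Fin a) × EuclideanSpace ℝ (Fin c) → EuclideanSpace ℝ (Fin b))
    (hy : Differentiable ℝ y) (hq : Differentiable ℝ q)
    (hsys1 : ∀ x r, q (x, r) = gradx S32 (y (x, r)) r)
    (hsys2 : ∀ x r, y (x, r) = gradq S21 x (q (x, r)))
    (S31 : EuclideanSpace ℝ (Fin a) × EuclideanSpace ℝ (Fin c) → ℝ)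
    (hS31 : ∀ x r, S31 (x, r) = S32 (y (x, r), r) + S21 (x, q (x, r)) - ⟪q (x, r), y (x, r)⟫) :
    ∀ x r,
      gradx S31 x r = gradx S21 x (q (x, r)) ∧
      gradq S31 x r = gradq S32 (y (x, r)) r ∧
      ((gradq S31 x r, r), (y (x, r), q (x, r))) ∈ thickRel S32 ∧
      ((y (x, r), q (x, r)), (x, gradx S31 x r)) ∈ thickRel S21 := by
  intro x r
  have hS31_eq : S31 = compositeGeneratingFunction S32 S21 y q := funext fun p => hS31 p.1 p.2
  have hD : HasFDerivAt S31 _ (x, r) := hS31_eq ▸ hasFDerivAt_compositeGeneratingFunction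
    (hS21.differentiable one_ne_zero _) (hS32.differentiable one_ne_zero _) (hy _) (hq _)
    (hsys1 x r) (hsys2 x r)
  have hgx := hD.gradx_eq
  have hgr := hD.gradq_eq
  exact ⟨hgx, hgr, ⟨hgr, hsys1 x r⟩, ⟨hsys2 x r, hgx⟩⟩
end

section
/- Let S21 : ℝ^a × ℝ^b → ℝ, S32 : ℝ^b × ℝ^c → ℝ, S43 : ℝ^c × ℝ^d → ℝ be C¹ generating functions. Assume: (i) differentiable maps (y21, q21) : ℝ^a × ℝ^c → ℝ^b × ℝ^b solve the composition system q21 = ∇_y S32(y21, r), y21 = ∇_q S21(x, q21), defining S31(x,r) := S32(y21,r) + S21(x,q21) − ⟨q21, y21⟩, and S31 is C¹; (ii) differentiable maps (z32, r32) : ℝ^b × ℝ^d → ℝ^c × ℝ^c solve r32 = ∇_z S43(z32, s), z32 = ∇_r S32(y, r32), defining S42(y,s) := S43(z32,s) + S32(y,r32) − ⟨r32, z32⟩, and S42 is C¹; (iii) differentiable maps (z', r') : ℝ^a × ℝ^d → ℝ^c × ℝ^c solve r' = ∇_z S43(z', s), z' = ∇_r S31(x, r'), defining the composite S41(x,s)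 := S43(z',s) + S31(x,r') − ⟨r', z'⟩; (iv) differentiable maps (y'', q'') : ℝ^a × ℝ^d → ℝ^b × ℝ^b solve q'' = ∇_y S42(y'', s), y'' = ∇_q S21(x, q''), defining S41'(x,s) := S42(y'',s) + S21(x,q'') − ⟨q'', y''⟩; (v) for each (x,s), the system in unknowns (y,q,z,r) ∈ ℝ^b × ℝ^b × ℝ^c × ℝ^c given by q = ∇_y S32(y,r), y = ∇_q S21(x,q), r = ∇_z S43(z,s), z = ∇_r S32(y,r) has at most one solution. Then S41 = S41' as functions on ℝ^a × ℝ^d; both are equal to S43(z,s) + S32(y,r) + S21(x,q) − ⟨q,y⟩ − ⟨r,z⟩ evaluated at the unique solution (y,q,z,r) of the system in (v). -/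
/-!
By the envelope property, a composite generating function depends on its outer variables only
explicitly: `∇_r S31 (x, r) = ∇_r S32 (y21, r)` and `∇_y S42 (y, s) = ∇_y S32 (y, r32)`.
So the points defining `S41` and `S41'` both solve the stationarity system of
`S43 (z, s) + S32 (y, r) + S21 (x, q) - ⟪q, y⟫ - ⟪r, z⟫`, hence coincide by uniqueness, and at
that point both composites expand to the same expression.
-/

open scoped RealInnerProductSpace

open InnerProductSpace ContinuousLinearMap
open scoped Gradient

section PartialGradient

variable {E F : Type*} [NormedAddCommGroup E] [InnerProductSpace ℝ E] [CompleteSpace E]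
  [NormedAddCommGroup F] [InnerProductSpace ℝ F] [CompleteSpace F]
  {S : E × F → ℝ} {x : E} {q : F}

theorem HasFDerivAt.hasGradientAt_left {g : E} {h : F}
    (hS : HasFDerivAt S ((toDual ℝ E g).coprod (toDual ℝ F h)) (x, q)) :
    HasGradientAt (fun x' => S (x', q)) g x := by
  have h := hS.comp x (hasFDerivAt_prodMk_left (𝕜 := ℝ) x q)
  rwa [coprod_comp_inl] at h

theorem HasFDerivAt.hasGradientAt_right {g : E} {h : F}
    (hS : HasFDerivAt S ((toDual ℝ E g).coprod (toDual ℝ F h)) (x, q)) :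
    HasGradientAt (fun q' => S (x, q')) h q := by
  have h := hS.comp q (hasFDerivAt_prodMk_right (𝕜 := ℝ) x q)
  rwa [coprod_comp_inr] at h

theorem DifferentiableAt.hasFDerivAt_coprod_gradient (hS : DifferentiableAt ℝ S (x, q)) :
    HasFDerivAt S ((toDual ℝ E (∇ (fun x' => S (x', q)) x)).coprod
      (toDual ℝ F (∇ (fun q' => S (x, q')) q))) (x, q) := by
  have hL := hS.hasFDerivAt
  have hx : HasFDerivAt (fun x' => S (x', q)) _ x := hL.comp x (hasFDerivAt_prodMk_left x q)
  have hq : HasFDerivAt (fun q' => S (x, q')) _ q := hL.comp q (hasFDerivAt_prodMk_right x q)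
  rw [hx.hasGradientAt.gradient, hq.hasGradientAt.gradient]
  simpa using hL

end PartialGradient

section ThickComposition

variable {E F G H : Type*} [NormedAddCommGroup F] [InnerProductSpace ℝ F]

/-- The generating function of the composite, where `(x, r) ↦ (y, q)` is meant to solve
`q = ∇_y S32 (y, r)`, `y = ∇_q S21 (x, q)`. -/
def thickComp (S32 : F × G → ℝ) (S21 : E × F → ℝ) (y q : E × G → F) : E × G → ℝ :=
  fun p => S32 (y p, p.2) + S21 (p.1, q p) - ⟪q p, y p⟫

variable [NormedAddCommGroup G] [InnerProductSpace ℝ G]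

theorem thickComp_thickComp_left_apply
    (S43 : G × H → ℝ) (S32 : F × G → ℝ) (S21 : E × F → ℝ) (y q : E × G → F) (z r : E × H → G)
    (x : E) (s : H) :
    thickComp S43 (thickComp S32 S21 y q) z r (x, s) =
      S43 (z (x, s), s) + S32 (y (x, r (x, s)), r (x, s)) + S21 (x, q (x, r (x, s)))
        - ⟪q (x, r (x, s)), y (x, r (x, s))⟫ - ⟪r (x, s), z (x, s)⟫ := by
  simp only [thickComp]
  ring

theorem thickComp_thickComp_right_apply
    (S43 : G × H → ℝ) (S32 : F × G → ℝ) (S21 : E × F → ℝ) (z r : F × H → G) (y q : E × H → F)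
    (x : E) (s : H) :
    thickComp (thickComp S43 S32 z r) S21 y q (x, s) =
      S43 (z (y (x, s), s), s) + S32 (y (x, s), r (y (x, s), s)) + S21 (x, q (x, s))
        - ⟪q (x, s), y (x, s)⟫ - ⟪r (y (x, s), s), z (y (x, s), s)⟫ := by
  simp only [thickComp]
  ring

variable [CompleteSpace F] [CompleteSpace G]

/-- The envelope property: the terms in `dy` and `dq` cancel by the stationarity equations. -/
theorem hasFDerivAt_thickComp [NormedAddCommGroup E] [InnerProductSpace ℝ E] [CompleteSpace E]
    {S32 : F × G → ℝ} {S21 : E × F → ℝ} {y q : E × G → F} {p : E × G}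
    (h32 : DifferentiableAt ℝ S32 (y p, p.2)) (h21 : DifferentiableAt ℝ S21 (p.1, q p))
    (hy : DifferentiableAt ℝ y p) (hq : DifferentiableAt ℝ q p)
    (hqy : q p = ∇ (fun y' => S32 (y', p.2)) (y p))
    (hyq : y p = ∇ (fun q' => S21 (p.1, q')) (q p)) :
    HasFDerivAt (thickComp S32 S21 y q)
      ((toDual ℝ E (∇ (fun x' => S21 (x', q p)) p.1)).coprod
        (toDual ℝ G (∇ (fun r' => S32 (y p, r')) p.2))) p := by
  have h1 := h32.hasFDerivAt_coprod_gradient.comp p (hy.hasFDerivAt.prodMk hasFDerivAt_snd)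
  have h2 := h21.hasFDerivAt_coprod_gradient.comp p (hasFDerivAt_fst.prodMk hq.hasFDerivAt)
  have h3 := hq.hasFDerivAt.inner ℝ hy.hasFDerivAt
  refine ((h1.add h2).sub h3).congr_fderiv (ContinuousLinearMap.ext fun v => ?_)
  rw [← hqy, ← hyq]
  simp only [sub_apply, add_apply, comp_apply, ContinuousLinearMap.prod_apply, coe_fst', coe_snd',
    coprod_apply, toDual_apply_apply, fderivInnerCLM_apply, real_inner_comm]
  ring

/-- The stationarity equations, in `(y, q, z, r)`, of
`S43 (z, s) + S32 (y, r) + S21 (x, q) - ⟪q, y⟫ - ⟪r, z⟫`. -/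
def IsTripleStationary (S21 : E × F → ℝ) (S32 : F × G → ℝ) (S43 : G × H → ℝ) (x : E) (s : H)
    (y q : F) (z r : G) : Prop :=
  q = ∇ (fun y' => S32 (y', r)) y ∧ y = ∇ (fun q' => S21 (x, q')) q ∧
    r = ∇ (fun z' => S43 (z', s)) z ∧ z = ∇ (fun r' => S32 (y, r')) r

variable {S21 : E × F → ℝ} {S32 : F × G → ℝ} {S43 : G × H → ℝ} {x : E} {s : H}

theorem IsTripleStationary.of_left [NormedAddCommGroup E] [InnerProductSpace ℝ E]
    [CompleteSpace E] {y q : E × G → F} {z r : G}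
    (h32 : DifferentiableAt ℝ S32 (y (x, r), r)) (h21 : DifferentiableAt ℝ S21 (x, q (x, r)))
    (hy : DifferentiableAt ℝ y (x, r)) (hq : DifferentiableAt ℝ q (x, r))
    (hqy : q (x, r) = ∇ (fun y' => S32 (y', r)) (y (x, r)))
    (hyq : y (x, r) = ∇ (fun q' => S21 (x, q')) (q (x, r)))
    (hrz : r = ∇ (fun z' => S43 (z', s)) z)
    (hzr : z = ∇ (fun r' => thickComp S32 S21 y q (x, r')) r) :
    IsTripleStationary S21 S32 S43 x s (y (x, r)) (q (x, r)) z r :=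
  ⟨hqy, hyq, hrz,
    hzr.trans (hasFDerivAt_thickComp h32 h21 hy hq hqy hyq).hasGradientAt_right.gradient⟩

theorem IsTripleStationary.of_right [NormedAddCommGroup H] [InnerProductSpace ℝ H]
    [CompleteSpace H] {z r : F × H → G} {y q : F}
    (h43 : DifferentiableAt ℝ S43 (z (y, s), s)) (h32 : DifferentiableAt ℝ S32 (y, r (y, s)))
    (hz : DifferentiableAt ℝ z (y, s)) (hr : DifferentiableAt ℝ r (y, s))
    (hrz : r (y, s) = ∇ (fun z' => S43 (z', s)) (z (y, s)))
    (hzr : z (y, s) = ∇ (fun r' => S32 (y, r')) (r (y, s)))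
    (hqy : q = ∇ (fun y' => thickComp S43 S32 z r (y', s)) y)
    (hyq : y = ∇ (fun q' => S21 (x, q')) q) :
    IsTripleStationary S21 S32 S43 x s y q (z (y, s)) (r (y, s)) :=
  ⟨hqy.trans (hasFDerivAt_thickComp h43 h32 hz hr hrz hzr).hasGradientAt_left.gradient, hyq,
    hrz, hzr⟩

end ThickComposition

theorem thick_composition_assoc_general {a b c d : ℕ}
    (S21 : EuclideanSpace ℝ (Fin a) × EuclideanSpace ℝ (Fin b) → ℝ)
    (S32 : EuclideanSpace ℝ (Fin b) × EuclideanSpace ℝ (Fin c) → ℝ)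
    (S43 : EuclideanSpace ℝ (Fin c) × EuclideanSpace ℝ (Fin d) → ℝ)
    (hS21 : ContDiff ℝ 1 S21) (hS32 : ContDiff ℝ 1 S32) (hS43 : ContDiff ℝ 1 S43)
    -- (i) the composite S31 = S32 ∘ S21
    (y21 q21 : EuclideanSpace ℝ (Fin a) × EuclideanSpace ℝ (Fin c) → EuclideanSpace ℝ (Fin b))
    (hy21 : Differentiable ℝ y21) (hq21 : Differentiable ℝ q21)
    (hsys21a : ∀ x r, q21 (x, r) = gradx S32 (y21 (x, r)) r)
    (hsys21b : ∀ x r, y21 (x, r) = gradq S21 x (q21 (x, r)))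
    (S31 : EuclideanSpace ℝ (Fin a) × EuclideanSpace ℝ (Fin c) → ℝ)
    (hS31 : ∀ x r, S31 (x, r) =
      S32 (y21 (x, r), r) + S21 (x, q21 (x, r)) - ⟪q21 (x, r), y21 (x, r)⟫)
    -- (ii) the composite S42 = S43 ∘ S32
    (z32 r32 : EuclideanSpace ℝ (Fin b) × EuclideanSpace ℝ (Fin d) → EuclideanSpace ℝ (Fin c))
    (hz32 : Differentiable ℝ z32) (hr32 : Differentiable ℝ r32)
    (hsys32a : ∀ y s, r32 (y, s) = gradx S43 (z32 (y, s)) s)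
    (hsys32b : ∀ y s, z32 (y, s) = gradq S32 y (r32 (y, s)))
    (S42 : EuclideanSpace ℝ (Fin b) × EuclideanSpace ℝ (Fin d) → ℝ)
    (hS42 : ∀ y s, S42 (y, s) =
      S43 (z32 (y, s), s) + S32 (y, r32 (y, s)) - ⟪r32 (y, s), z32 (y, s)⟫)
    -- (iii) the composite S41 = S43 ∘ S31
    (z' r' : EuclideanSpace ℝ (Fin a) × EuclideanSpace ℝ (Fin d) → EuclideanSpace ℝ (Fin c))
    (hsysa : ∀ x s, r' (x, s) = gradx S43 (z' (x, s)) s)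
    (hsysb : ∀ x s, z' (x, s) = gradq S31 x (r' (x, s)))
    (S41 : EuclideanSpace ℝ (Fin a) × EuclideanSpace ℝ (Fin d) → ℝ)
    (hS41 : ∀ x s, S41 (x, s) =
      S43 (z' (x, s), s) + S31 (x, r' (x, s)) - ⟪r' (x, s), z' (x, s)⟫)
    -- (iv) the composite S41' = S42 ∘ S21
    (y'' q'' : EuclideanSpace ℝ (Fin a) × EuclideanSpace ℝ (Fin d) → EuclideanSpace ℝ (Fin b))
    (hsysc : ∀ x s, q'' (x, s) = gradx S42 (y'' (x, s)) s)
    (hsysd : ∀ x s, y'' (x, s) = gradq S21 x (q'' (x, s)))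
    (S41' : EuclideanSpace ℝ (Fin a) × EuclideanSpace ℝ (Fin d) → ℝ)
    (hS41' : ∀ x s, S41' (x, s) =
      S42 (y'' (x, s), s) + S21 (x, q'' (x, s)) - ⟪q'' (x, s), y'' (x, s)⟫)
    -- (v) uniqueness of solutions of the full coupled system
    (huniq : ∀ x s
      (y q : EuclideanSpace ℝ (Fin b)) (z r : EuclideanSpace ℝ (Fin c))
      (y₁ q₁ : EuclideanSpace ℝ (Fin b)) (z₁ r₁ : EuclideanSpace ℝ (Fin c)),
      (q = gradx S32 y r ∧ y = gradq S21 x q ∧ r = gradx S43 z s ∧ z = gradq S32 y r) →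
      (q₁ = gradx S32 y₁ r₁ ∧ y₁ = gradq S21 x q₁ ∧ r₁ = gradx S43 z₁ s ∧
        z₁ = gradq S32 y₁ r₁) →
      (y, q, z, r) = (y₁, q₁, z₁, r₁)) :
    S41 = S41' ∧
    ∀ x s (y q : EuclideanSpace ℝ (Fin b)) (z r : EuclideanSpace ℝ (Fin c)),
      (q = gradx S32 y r ∧ y = gradq S21 x q ∧ r = gradx S43 z s ∧ z = gradq S32 y r) →
      S41 (x, s) = S43 (z, s) + S32 (y, r) + S21 (x, q) - ⟪q, y⟫ - ⟪r, z⟫ ∧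
      S41' (x, s) = S43 (z, s) + S32 (y, r) + S21 (x, q) - ⟪q, y⟫ - ⟪r, z⟫ := by
  obtain rfl : S31 = thickComp S32 S21 y21 q21 := funext fun p => hS31 p.1 p.2
  obtain rfl : S42 = thickComp S43 S32 z32 r32 := funext fun p => hS42 p.1 p.2
  obtain rfl : S41 = thickComp S43 (thickComp S32 S21 y21 q21) z' r' :=
    funext fun p => hS41 p.1 p.2
  obtain rfl : S41' = thickComp (thickComp S43 S32 z32 r32) S21 y'' q'' :=
    funext fun p => hS41' p.1 p.2
  have h21 := hS21.differentiable one_ne_zero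
  have h32 := hS32.differentiable one_ne_zero
  have h43 := hS43.differentiable one_ne_zero
  have stationary_left (x s) : IsTripleStationary S21 S32 S43 x s
      (y21 (x, r' (x, s))) (q21 (x, r' (x, s))) (z' (x, s)) (r' (x, s)) :=
    .of_left (h32 _) (h21 _) (hy21 _) (hq21 _) (hsys21a _ _) (hsys21b _ _) (hsysa x s) (hsysb x s)
  have stationary_right (x s) : IsTripleStationary S21 S32 S43 x s
      (y'' (x, s)) (q'' (x, s)) (z32 (y'' (x, s), s)) (r32 (y'' (x, s), s)) :=
    .of_right (h43 _) (h32 _) (hz32 _) (hr32 _) (hsys32a _ _) (hsys32b _ _) (hsysc x s) (hsysd x s)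
  have unique {x s y q z r y₁ q₁ z₁ r₁} (h : IsTripleStationary S21 S32 S43 x s y q z r)
      (h₁ : IsTripleStationary S21 S32 S43 x s y₁ q₁ z₁ r₁) :
      y = y₁ ∧ q = q₁ ∧ z = z₁ ∧ r = r₁ := by
    simpa using huniq x s _ _ _ _ _ _ _ _ h h₁
  refine ⟨funext fun ⟨x, s⟩ => ?_, fun x s y q z r h => ⟨?_, ?_⟩⟩
  · obtain ⟨hy, hq, hz, hr⟩ := unique (stationary_left x s) (stationary_right x s)
    rw [thickComp_thickComp_left_apply, thickComp_thickComp_right_apply, hy, hq, hz, hr]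
  · obtain ⟨rfl, rfl, rfl, rfl⟩ := unique (stationary_left x s) h
    exact thickComp_thickComp_left_apply ..
  · obtain ⟨rfl, rfl, rfl, rfl⟩ := unique (stationary_right x s) h
    exact thickComp_thickComp_right_apply ..

/-- Associativity of the composition of thick morphisms: composing the generating
functions `S21, S32, S43` in either order yields the same generating function
`S41 = S41'`, equal to `S43 + S32 + S21 − ⟨q,y⟩ − ⟨r,z⟩` at the unique solution of the
full coupled system. -/
theorem thick_composition_assoc {a b c d : ℕ}
    (S21 : EuclideanSpace ℝ (Fin a) × EuclideanSpace ℝ (Fin b) → ℝ)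
    (S32 : EuclideanSpace ℝ (Fin b) × EuclideanSpace ℝ (Fin c) → ℝ)
    (S43 : EuclideanSpace ℝ (Fin c) × EuclideanSpace ℝ (Fin d) → ℝ)
    (hS21 : ContDiff ℝ 1 S21) (hS32 : ContDiff ℝ 1 S32) (hS43 : ContDiff ℝ 1 S43)
    -- (i) the composite S31 = S32 ∘ S21
    (y21 q21 : EuclideanSpace ℝ (Fin a) × EuclideanSpace ℝ (Fin c) → EuclideanSpace ℝ (Fin b))
    (hy21 : Differentiable ℝ y21) (hq21 : Differentiable ℝ q21)
    (hsys21a : ∀ x r, q21 (x, r) = gradx S32 (y21 (x, r)) r)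
    (hsys21b : ∀ x r, y21 (x, r) = gradq S21 x (q21 (x, r)))
    (S31 : EuclideanSpace ℝ (Fin a) × EuclideanSpace ℝ (Fin c) → ℝ)
    (hS31 : ∀ x r, S31 (x, r) =
      S32 (y21 (x, r), r) + S21 (x, q21 (x, r)) - ⟪q21 (x, r), y21 (x, r)⟫)
    (hS31smooth : ContDiff ℝ 1 S31)
    -- (ii) the composite S42 = S43 ∘ S32
    (z32 r32 : EuclideanSpace ℝ (Fin b) × EuclideanSpace ℝ (Fin d) → EuclideanSpace ℝ (Fin c))
    (hz32 : Differentiable ℝ z32) (hr32 : Differentiable ℝ r32)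
    (hsys32a : ∀ y s, r32 (y, s) = gradx S43 (z32 (y, s)) s)
    (hsys32b : ∀ y s, z32 (y, s) = gradq S32 y (r32 (y, s)))
    (S42 : EuclideanSpace ℝ (Fin b) × EuclideanSpace ℝ (Fin d) → ℝ)
    (hS42 : ∀ y s, S42 (y, s) =
      S43 (z32 (y, s), s) + S32 (y, r32 (y, s)) - ⟪r32 (y, s), z32 (y, s)⟫)
    (hS42smooth : ContDiff ℝ 1 S42)
    -- (iii) the composite S41 = S43 ∘ S31
    (z' r' : EuclideanSpace ℝ (Fin a) × EuclideanSpace ℝ (Fin d) → EuclideanSpace ℝ (Fin c))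
    (hz' : Differentiable ℝ z') (hr' : Differentiable ℝ r')
    (hsysa : ∀ x s, r' (x, s) = gradx S43 (z' (x, s)) s)
    (hsysb : ∀ x s, z' (x, s) = gradq S31 x (r' (x, s)))
    (S41 : EuclideanSpace ℝ (Fin a) × EuclideanSpace ℝ (Fin d) → ℝ)
    (hS41 : ∀ x s, S41 (x, s) =
      S43 (z' (x, s), s) + S31 (x, r' (x, s)) - ⟪r' (x, s), z' (x, s)⟫)
    -- (iv) the composite S41' = S42 ∘ S21
    (y'' q'' : EuclideanSpace ℝ (Fin a) × EuclideanSpace ℝ (Fin d) → EuclideanSpace ℝ (Fin b))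
    (hy'' : Differentiable ℝ y'') (hq'' : Differentiable ℝ q'')
    (hsysc : ∀ x s, q'' (x, s) = gradx S42 (y'' (x, s)) s)
    (hsysd : ∀ x s, y'' (x, s) = gradq S21 x (q'' (x, s)))
    (S41' : EuclideanSpace ℝ (Fin a) × EuclideanSpace ℝ (Fin d) → ℝ)
    (hS41' : ∀ x s, S41' (x, s) =
      S42 (y'' (x, s), s) + S21 (x, q'' (x, s)) - ⟪q'' (x, s), y'' (x, s)⟫)
    -- (v) uniqueness of solutions of the full coupled system
    (huniq : ∀ x s
      (y q : EuclideanSpace ℝ (Fin b)) (z r : EuclideanSpace ℝ (Fin c))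
      (y₁ q₁ : EuclideanSpace ℝ (Fin b)) (z₁ r₁ : EuclideanSpace ℝ (Fin c)),
      (q = gradx S32 y r ∧ y = gradq S21 x q ∧ r = gradx S43 z s ∧ z = gradq S32 y r) →
      (q₁ = gradx S32 y₁ r₁ ∧ y₁ = gradq S21 x q₁ ∧ r₁ = gradx S43 z₁ s ∧
        z₁ = gradq S32 y₁ r₁) →
      (y, q, z, r) = (y₁, q₁, z₁, r₁)) :
    S41 = S41' ∧
    ∀ x s (y q : EuclideanSpace ℝ (Fin b)) (z r : EuclideanSpace ℝ (Fin c)),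
      (q = gradx S32 y r ∧ y = gradq S21 x q ∧ r = gradx S43 z s ∧ z = gradq S32 y r) →
      S41 (x, s) = S43 (z, s) + S32 (y, r) + S21 (x, q) - ⟪q, y⟫ - ⟪r, z⟫ ∧
      S41' (x, s) = S43 (z, s) + S32 (y, r) + S21 (x, q) - ⟪q, y⟫ - ⟪r, z⟫ :=
  thick_composition_assoc_general S21 S32 S43 hS21 hS32 hS43 y21 q21 hy21 hq21 hsys21a hsys21b S31
    hS31 z32 r32 hz32 hr32 hsys32a hsys32b S42 hS42 z' r' hsysa hsysb S41 hS41 y'' q'' hsysc hsysd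
    S41' hS41' huniq
end

section
/- Let V1, V2, V3 be finite-dimensional real vector spaces, Φ21 : V1 → V2 any map, and Φ32 : V2 → V3 a differentiable map. Consider the adjoint generating functions S_A : V3* × V2 → ℝ, S_A(γ, w) := γ(Φ32 w) (for the adjoint thick morphism Φ32* : V3* ⇢ V2*) and S_B : V2* × V1 → ℝ, S_B(β, v) := β(Φ21 v) (for Φ21* : V2* ⇢ V1*). Then for each (γ, v) ∈ V3* × V1, the pair w := Φ21 v ∈ V2, β := (DΦ32(Φ21 v))ᵀ γ = γ ∘ DΦ32(Φ21 v) ∈ V2* solves the composition system w = D_β S_B(β, v) (under W** ≅ W) and β = D_w S_A(γ, w), and the resulting composite generating function S_A(γ, w) + S_B(β, v) − β(w) equals γ(Φ32(Φ21 v)), which is exactly the adjoint generating function of the composite map Φ32 ∘ Φ21 : V1 → V3. Hence (Φ32 ∘ Φ21)* = Φ21* ∘ Φ32* as thick morphisms V3* ⇢ V1*. -/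
open NormedSpace

section

variable {𝕜 E F G : Type*} [NontriviallyNormedField 𝕜]
  [NormedAddCommGroup E] [NormedSpace 𝕜 E] [NormedAddCommGroup F] [NormedSpace 𝕜 F]
  [NormedAddCommGroup G] [NormedSpace 𝕜 G]

theorem fderiv_strongDual_eval (x : E) (β : StrongDual 𝕜 E) :
    fderiv 𝕜 (fun β' : StrongDual 𝕜 E => β' x) β = inclusionInDoubleDual 𝕜 E x :=
  (inclusionInDoubleDual 𝕜 E x).fderiv

theorem fderiv_continuousLinearMap_comp (L : F →L[𝕜] G) {f : E → F} {x : E}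
    (hf : DifferentiableAt 𝕜 f x) :
    fderiv 𝕜 (fun y => L (f y)) x = L.comp (fderiv 𝕜 f x) := by
  rw [fderiv_fun_comp x L.differentiableAt hf, L.fderiv]

end

theorem adjoint_reverses_composition_general
    {V1 V2 V3 : Type*}
    [NormedAddCommGroup V1] [NormedSpace ℝ V1]
    [NormedAddCommGroup V2] [NormedSpace ℝ V2]
    [NormedAddCommGroup V3] [NormedSpace ℝ V3]
    (Φ21 : V1 → V2) (Φ32 : V2 → V3) (hΦ32 : Differentiable ℝ Φ32)
    (SA : StrongDual ℝ V3 × V2 → ℝ) (hSA : ∀ γ w, SA (γ, w) = γ (Φ32 w))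
    (SB : StrongDual ℝ V2 × V1 → ℝ) (hSB : ∀ β v, SB (β, v) = β (Φ21 v)) :
    ∀ (γ : StrongDual ℝ V3) (v : V1),
      -- w := Φ21 v and β := γ ∘ DΦ32(Φ21 v) solve the composition system:
      inclusionInDoubleDual ℝ V2 (Φ21 v) =
        fderiv ℝ (fun β' : StrongDual ℝ V2 => SB (β', v)) (γ.comp (fderiv ℝ Φ32 (Φ21 v))) ∧
      γ.comp (fderiv ℝ Φ32 (Φ21 v)) =
        fderiv ℝ (fun w' : V2 => SA (γ, w')) (Φ21 v) ∧
      -- the composite generating function is the adjoint generating function of Φ32 ∘ Φ21: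
      SA (γ, Φ21 v) + SB (γ.comp (fderiv ℝ Φ32 (Φ21 v)), v) -
          (γ.comp (fderiv ℝ Φ32 (Φ21 v))) (Φ21 v) =
        γ ((Φ32 ∘ Φ21) v) := by
  intro γ v
  have hSB_v : (fun β' => SB (β', v)) = fun β' => β' (Φ21 v) := funext fun β' => hSB β' v
  have hSA_γ : (fun w' => SA (γ, w')) = fun w' => γ (Φ32 w') := funext fun w' => hSA γ w'
  refine ⟨?_, ?_, ?_⟩
  · rw [hSB_v, fderiv_strongDual_eval]
  · rw [hSA_γ, fderiv_continuousLinearMap_comp γ (hΦ32 _)]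
  · rw [hSA, hSB, Function.comp_apply, add_sub_cancel_right]

/-- The adjoint construction reverses composition: for `Φ21 : V1 → V2` arbitrary and
`Φ32 : V2 → V3` differentiable, `w = Φ21 v` and `β = γ ∘ DΦ32(Φ21 v)` solve the
composition system for the adjoint thick morphisms, and the composite generating
function `S_A + S_B − β(w)` equals the adjoint generating function `γ(Φ32(Φ21 v))` of
`Φ32 ∘ Φ21`, i.e. `(Φ32 ∘ Φ21)* = Φ21* ∘ Φ32*`. -/
theorem adjoint_reverses_composition
    {V1 V2 V3 : Type*}
    [NormedAddCommGroup V1] [NormedSpace ℝ V1] [FiniteDimensional ℝ V1]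
    [NormedAddCommGroup V2] [NormedSpace ℝ V2] [FiniteDimensional ℝ V2]
    [NormedAddCommGroup V3] [NormedSpace ℝ V3] [FiniteDimensional ℝ V3]
    (Φ21 : V1 → V2) (Φ32 : V2 → V3) (hΦ32 : Differentiable ℝ Φ32)
    (SA : StrongDual ℝ V3 × V2 → ℝ) (hSA : ∀ γ w, SA (γ, w) = γ (Φ32 w))
    (SB : StrongDual ℝ V2 × V1 → ℝ) (hSB : ∀ β v, SB (β, v) = β (Φ21 v)) :
    ∀ (γ : StrongDual ℝ V3) (v : V1),
      -- w := Φ21 v and β := γ ∘ DΦ32(Φ21 v) solve the composition system: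
      inclusionInDoubleDual ℝ V2 (Φ21 v) =
        fderiv ℝ (fun β' : StrongDual ℝ V2 => SB (β', v)) (γ.comp (fderiv ℝ Φ32 (Φ21 v))) ∧
      γ.comp (fderiv ℝ Φ32 (Φ21 v)) =
        fderiv ℝ (fun w' : V2 => SA (γ, w')) (Φ21 v) ∧
      -- the composite generating function is the adjoint generating function of Φ32 ∘ Φ21:
      SA (γ, Φ21 v) + SB (γ.comp (fderiv ℝ Φ32 (Φ21 v)), v) -
          (γ.comp (fderiv ℝ Φ32 (Φ21 v))) (Φ21 v) =
        γ ((Φ32 ∘ Φ21) v) :=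
  adjoint_reverses_composition_general Φ21 Φ32 hΦ32 SA hSA SB hSB
end

section
/- Let V and W be finite-dimensional real vector spaces and Φ : V → W a differentiable map. Fix v₀ ∈ V and let f : V* → ℝ be the linear function f(α) := α(v₀). Consider the adjoint thick morphism Φ* : W* ⇢ V* with generating function S*(β, v) := β(Φ v) on W* × V. Then for every β ∈ W*, the pair v := v₀, α := (DΦ(v₀))ᵀ β = β ∘ DΦ(v₀) ∈ V* solves the pullback system v = ∇f(α) (the gradient of the linear function f, identified with v₀ ∈ V ≅ V**) and α = D_v S*(β, v), and the pushforward value Φ_*[f](β) := f(α) + S*(β, v) − α(v) equals β(Φ(v₀)). Hence the nonlinear pushforward Φ_* sends the linear function α ↦ α(v₀) on V* to the linear function β ↦ β(Φ(v₀)) on W*; on fiberwise-linear functions it coincides with the ordinary pushforward v₀ ↦ Φ(v₀). -/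
open NormedSpace

theorem fderiv_eq_inclusionInDoubleDual {𝕜 E : Type*} [NontriviallyNormedField 𝕜]
    [NormedAddCommGroup E] [NormedSpace 𝕜 E] {f : StrongDual 𝕜 E → 𝕜} {v : E}
    (hf : ∀ α, f α = α v) (α : StrongDual 𝕜 E) :
    fderiv 𝕜 f α = inclusionInDoubleDual 𝕜 E v := by
  have hf_eq : f = inclusionInDoubleDual 𝕜 E v :=
    funext fun α => (hf α).trans (dual_def 𝕜 E v α).symm
  rw [hf_eq]
  exact ContinuousLinearMap.fderiv _

theorem fderiv_dual_apply_comp {𝕜 E F : Type*} [NontriviallyNormedField 𝕜]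
    [NormedAddCommGroup E] [NormedSpace 𝕜 E] [NormedAddCommGroup F] [NormedSpace 𝕜 F]
    (β : StrongDual 𝕜 F) {Φ : E → F} {x : E} (hΦ : DifferentiableAt 𝕜 Φ x) :
    fderiv 𝕜 (fun v => β (Φ v)) x = β.comp (fderiv 𝕜 Φ x) := by
  rw [fderiv_fun_comp x β.differentiableAt hΦ, β.fderiv]

theorem pushforward_of_linear_function_general
    {V W : Type*}
    [NormedAddCommGroup V] [NormedSpace ℝ V]
    [NormedAddCommGroup W] [NormedSpace ℝ W]
    (Φ : V → W) (hΦ : Differentiable ℝ Φ) (v₀ : V)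
    (f : StrongDual ℝ V → ℝ) (hf : ∀ α, f α = α v₀)
    (Sstar : StrongDual ℝ W × V → ℝ) (hSstar : ∀ β v, Sstar (β, v) = β (Φ v)) :
    ∀ β : StrongDual ℝ W,
      -- v := v₀ solves v = ∇f(α): the derivative of f is the evaluation at v₀ ∈ V ≅ V**
      fderiv ℝ f (β.comp (fderiv ℝ Φ v₀)) = inclusionInDoubleDual ℝ V v₀ ∧
      -- α := β ∘ DΦ(v₀) solves α = D_v S*(β, v) at v = v₀
      β.comp (fderiv ℝ Φ v₀) = fderiv ℝ (fun v' : V => Sstar (β, v')) v₀ ∧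
      -- the pushforward value is β(Φ(v₀))
      f (β.comp (fderiv ℝ Φ v₀)) + Sstar (β, v₀) - (β.comp (fderiv ℝ Φ v₀)) v₀ =
        β (Φ v₀) := by
  intro β
  refine ⟨fderiv_eq_inclusionInDoubleDual hf _, ?_, ?_⟩
  · simp only [hSstar]
    exact (fderiv_dual_apply_comp β (hΦ v₀)).symm
  · rw [hf, hSstar, add_sub_cancel_left]

/-- On fiberwise-linear functions, the nonlinear pushforward along the adjoint thick
morphism of a differentiable map `Φ : V → W` coincides with the ordinary pushforward:
for `f(α) = α(v₀)` on `V*`, the pair `v := v₀`, `α := β ∘ DΦ(v₀)` solves the pullback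
system, and the pushforward value `f(α) + S*(β,v) − α(v)` equals `β(Φ(v₀))`. -/
theorem pushforward_of_linear_function
    {V W : Type*}
    [NormedAddCommGroup V] [NormedSpace ℝ V] [FiniteDimensional ℝ V]
    [NormedAddCommGroup W] [NormedSpace ℝ W] [FiniteDimensional ℝ W]
    (Φ : V → W) (hΦ : Differentiable ℝ Φ) (v₀ : V)
    (f : StrongDual ℝ V → ℝ) (hf : ∀ α, f α = α v₀)
    (Sstar : StrongDual ℝ W × V → ℝ) (hSstar : ∀ β v, Sstar (β, v) = β (Φ v)) :
    ∀ β : StrongDual ℝ W,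
      -- v := v₀ solves v = ∇f(α): the derivative of f is the evaluation at v₀ ∈ V ≅ V**
      fderiv ℝ f (β.comp (fderiv ℝ Φ v₀)) = inclusionInDoubleDual ℝ V v₀ ∧
      -- α := β ∘ DΦ(v₀) solves α = D_v S*(β, v) at v = v₀
      β.comp (fderiv ℝ Φ v₀) = fderiv ℝ (fun v' : V => Sstar (β, v')) v₀ ∧
      -- the pushforward value is β(Φ(v₀))
      f (β.comp (fderiv ℝ Φ v₀)) + Sstar (β, v₀) - (β.comp (fderiv ℝ Φ v₀)) v₀ =
        β (Φ v₀) :=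
  pushforward_of_linear_function_general Φ hΦ v₀ f hf Sstar hSstar
end

section
/- Let S : ℝ^a × ℝ^b → ℝ be C¹ and g : ℝ^b → ℝ be C². Suppose y : ℝ^a → ℝ^b is a differentiable map satisfying y(x) = ∇_q S(x, ∇g(y(x))) for all x ∈ ℝ^a. Define the pullback f : ℝ^a → ℝ by f(x) := g(y(x)) + S(x, ∇g(y(x))) − ⟨∇g(y(x)), y(x)⟩. Then f is differentiable and its gradient is ∇f(x) = ∇_x S(x, ∇g(y(x))) for all x. In particular, for every x the point (y(x), ∇g(y(x)); x, ∇f(x)) lies on the relation Φ_S, i.e., the differentials df(x) and dg(y(x)) are related by the canonical relation defined by S. -/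
open scoped RealInnerProductSpace

/-!
Differentiating `f(x) = g(y) + S(x, q) - ⟪q, y⟫` along `y = y(x)`, `q = ∇g(y(x))` gives
`dg(y) Dy + ∂ₓS + ∂_qS Dq - ⟪Dq, y⟫ - ⟪q, Dy⟫`. Since `dg(y) = ⟪q, ·⟫` and `∂_qS = ⟪y, ·⟫`,
everything except `∂ₓS` cancels, as in the envelope theorem.
-/

open ContinuousLinearMap

section

variable {E F : Type*} [NormedAddCommGroup E] [InnerProductSpace ℝ E]
  [NormedAddCommGroup F] [InnerProductSpace ℝ F] [CompleteSpace F]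

theorem ContDiff.contDiff_gradient {g : F → ℝ} {m n : WithTop ℕ∞}
    (hg : ContDiff ℝ n g) (hmn : m + 1 ≤ n) : ContDiff ℝ m (gradient g) :=
  (InnerProductSpace.toDual ℝ F).symm.toContinuousLinearEquiv.contDiff.comp (hg.fderiv_right hmn)

/-- The paper's `Φ*[g]` once `q = ∇g ∘ y` solves the pullback system. -/
noncomputable def thickPullback (S : E × F → ℝ) (g : F → ℝ) (y q : E → F) (x : E) : ℝ :=
  g (y x) + S (x, q x) - ⟪q x, y x⟫

theorem hasFDerivAt_thickPullback {S : E × F → ℝ} {g : F → ℝ} {y q : E → F} {x : E}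
    {A : E × F →L[ℝ] ℝ} {Dy Dq : E →L[ℝ] F}
    (hS : HasFDerivAt S A (x, q x)) (hy : HasFDerivAt y Dy x) (hq : HasFDerivAt q Dq x)
    (hg : HasGradientAt g (q x) (y x)) (hSq : HasGradientAt (fun w => S (x, w)) (y x) (q x)) :
    HasFDerivAt (thickPullback S g y q) (A.comp (inl ℝ E F)) x := by
  have hg' : HasFDerivAt g (InnerProductSpace.toDual ℝ F (q x)) (y x) := hg
  have hA : A.comp (inr ℝ E F) = InnerProductSpace.toDual ℝ F (y x) :=
    (hS.comp (q x) (hasFDerivAt_prodMk_right x (q x))).unique hSq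
  refine (((hg'.comp x hy).add (hS.comp x ((hasFDerivAt_id x).prodMk hq))).sub
    (hq.inner ℝ hy)).congr_fderiv ?_
  ext v
  have hsplit : A (v, Dq v) = A (v, 0) + A.comp (inr ℝ E F) (Dq v) := by
    rw [comp_apply, inr_apply, ← map_add, Prod.mk_add_mk, add_zero, zero_add]
  simp only [comp_apply, inl_apply, sub_apply, add_apply, prod_apply, id_apply,
    fderivInnerCLM_apply, hsplit, hA, InnerProductSpace.toDual_apply_apply, real_inner_comm (y x)]
  ring

theorem hasGradientAt_thickPullback [CompleteSpace E] {S : E × F → ℝ} {g : F → ℝ}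
    {y q : E → F} {x : E} (hS : DifferentiableAt ℝ S (x, q x)) (hy : DifferentiableAt ℝ y x)
    (hq : DifferentiableAt ℝ q x) (hg : HasGradientAt g (q x) (y x))
    (hSq : HasGradientAt (fun w => S (x, w)) (y x) (q x)) :
    HasGradientAt (thickPullback S g y q) (gradient (fun x' => S (x', q x)) x) x := by
  have hSx := hS.hasFDerivAt.comp x (hasFDerivAt_prodMk_left (𝕜 := ℝ) x (q x))
  exact (hasFDerivAt_thickPullback hS.hasFDerivAt hy.hasFDerivAt hq.hasFDerivAt hg
    hSq).congr_fderiv (hSx.unique hSx.differentiableAt.hasGradientAt)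

end

/-- The nonlinear pullback `f = Φ*[g]` along the thick morphism with generating function
`S` is differentiable with `∇f(x) = ∇_x S(x, ∇g(y(x)))`; in particular the differentials
`df(x)` and `dg(y(x))` are related by the canonical relation `Φ_S`. -/
theorem thick_pullback_gradient {a b : ℕ}
    (S : EuclideanSpace ℝ (Fin a) × EuclideanSpace ℝ (Fin b) → ℝ) (hS : ContDiff ℝ 1 S)
    (g : EuclideanSpace ℝ (Fin b) → ℝ) (hg : ContDiff ℝ 2 g)
    (y : EuclideanSpace ℝ (Fin a) → EuclideanSpace ℝ (Fin b)) (hy : Differentiable ℝ y)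
    (hyeq : ∀ x, y x = gradq S x (gradient g (y x)))
    (f : EuclideanSpace ℝ (Fin a) → ℝ)
    (hf : ∀ x, f x = g (y x) + S (x, gradient g (y x)) - ⟪gradient g (y x), y x⟫) :
    Differentiable ℝ f ∧
    ∀ x, gradient f x = gradx S x (gradient g (y x)) ∧
      ((y x, gradient g (y x)), (x, gradient f x)) ∈ thickRel S := by
  have hSd : Differentiable ℝ S := hS.differentiable one_ne_zero
  have hq : Differentiable ℝ (fun x => gradient g (y x)) :=
    ((hg.contDiff_gradient (m := 1) le_rfl).differentiable one_ne_zero).comp hy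
  have hfgrad : ∀ x, HasGradientAt f (gradx S x (gradient g (y x))) x := by
    intro x
    have hSq : HasGradientAt (fun w => S (x, w)) (y x) (gradient g (y x)) := by
      have hSq' : DifferentiableAt ℝ (fun w => S (x, w)) (gradient g (y x)) :=
        (hSd _).comp _ (hasFDerivAt_prodMk_right (𝕜 := ℝ) x _).differentiableAt
      convert hSq'.hasGradientAt using 1
      exact hyeq x
    rw [show f = thickPullback S g y (fun x => gradient g (y x)) from funext hf]
    exact hasGradientAt_thickPullback (hSd _) (hy x) (hq x)
      (hg.differentiable two_ne_zero _).hasGradientAt hSq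
  refine ⟨fun x => (hfgrad x).differentiableAt, fun x => ?_⟩
  have hgradf := (hfgrad x).gradient
  exact ⟨hgradf, hyeq x, hgradf⟩
end

section
/- Let φ : ℝ^a → ℝ^b be a C¹ map and define the generating function S : ℝ^a × ℝ^b → ℝ by S(x, q) := ⟨q, φ(x)⟩. Then: (1) the associated relation Φ_S = {(y, q; x, p) : y = ∇_q S(x,q), p = ∇_x S(x,q)} equals {((φ(x), q), (x, Dφ(x)ᵀ q)) : x ∈ ℝ^a, q ∈ ℝ^b}, the cotangent lift of the graph of φ; and (2) for every differentiable g : ℝ^b → ℝ, the pair y := φ(x), q := ∇g(φ(x)) solves the pullback system q = ∇g(y), y = ∇_q S(x, q), and the pullback value is Φ*[g](x) = g(y) + S(x,q) − ⟨q, y⟩ = g(φ(x)). Hence ordinary smooth maps embed into thick morphisms, with the nonlinear pullback reducing to the ordinary pullback g ↦ g ∘ φ. -/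
open scoped RealInnerProductSpace

/-!
For `S(x, q) = ⟪q, φ x⟫` the generating function is linear in the momentum `q`, so `∇_q S = φ x`,
while `∇_x S = (Dφ x)† q` is the gradient of `⟪q, φ ·⟫` by the chain rule. Hence the defining
equations of `Φ_S` say exactly that a point is in the cotangent lift of the graph of `φ`, and in the
pullback formula the terms `S(x, q)` and `⟪q, φ x⟫` cancel, leaving `g (φ x)`.
-/

section Gradient

open ContinuousLinearMap

variable {E F : Type*} [NormedAddCommGroup E] [InnerProductSpace ℝ E] [CompleteSpace E]
  [NormedAddCommGroup F] [InnerProductSpace ℝ F] [CompleteSpace F]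

theorem HasFDerivAt.hasGradientAt_inner_left {φ : E → F} {φ' : E →L[ℝ] F} {x : E} (q : F)
    (hφ : HasFDerivAt φ φ' x) : HasGradientAt (fun x' => ⟪q, φ x'⟫) (adjoint φ' q) x := by
  rw [hasGradientAt_iff_hasFDerivAt]
  refine ((innerSL ℝ q).hasFDerivAt.comp x hφ).congr_fderiv ?_
  ext v
  simp [adjoint_inner_left]

theorem gradient_inner_const_right (v q : F) : gradient (fun q' : F => ⟪q', v⟫) q = v := by
  simp_rw [real_inner_comm v]
  simpa [adjoint_id] using ((hasFDerivAt_id q).hasGradientAt_inner_left v).gradient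

end Gradient

def cotangentLift {a b : ℕ} (φ : EuclideanSpace ℝ (Fin a) → EuclideanSpace ℝ (Fin b)) :
    Set ((EuclideanSpace ℝ (Fin b) × EuclideanSpace ℝ (Fin b)) ×
      (EuclideanSpace ℝ (Fin a) × EuclideanSpace ℝ (Fin a))) :=
  {z | ∃ (x : EuclideanSpace ℝ (Fin a)) (q : EuclideanSpace ℝ (Fin b)),
    z = ((φ x, q), (x, ContinuousLinearMap.adjoint (fderiv ℝ φ x) q))}

section LinearInMomenta

variable {a b : ℕ} {φ : EuclideanSpace ℝ (Fin a) → EuclideanSpace ℝ (Fin b)}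
  {S : EuclideanSpace ℝ (Fin a) × EuclideanSpace ℝ (Fin b) → ℝ}

theorem gradq_of_eq_inner (hS : ∀ x q, S (x, q) = ⟪q, φ x⟫) (x : EuclideanSpace ℝ (Fin a))
    (q : EuclideanSpace ℝ (Fin b)) : gradq S x q = φ x := by
  simp only [gradq, hS, gradient_inner_const_right]

theorem gradx_of_eq_inner (hS : ∀ x q, S (x, q) = ⟪q, φ x⟫) (hφ : Differentiable ℝ φ)
    (x : EuclideanSpace ℝ (Fin a)) (q : EuclideanSpace ℝ (Fin b)) :
    gradx S x q = ContinuousLinearMap.adjoint (fderiv ℝ φ x) q := by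
  simp only [gradx, hS]
  exact ((hφ x).hasFDerivAt.hasGradientAt_inner_left q).gradient

theorem thickRel_eq_cotangentLift (hS : ∀ x q, S (x, q) = ⟪q, φ x⟫) (hφ : Differentiable ℝ φ) :
    thickRel S = cotangentLift φ := by
  ext ⟨⟨y, q⟩, ⟨x, p⟩⟩
  simp only [thickRel, cotangentLift, Set.mem_ofPred_eq, gradq_of_eq_inner hS,
    gradx_of_eq_inner hS hφ, Prod.mk.injEq]
  constructor
  · rintro ⟨rfl, rfl⟩
    exact ⟨x, q, ⟨rfl, rfl⟩, rfl, rfl⟩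
  · rintro ⟨x, q, ⟨rfl, rfl⟩, rfl, rfl⟩
    exact ⟨rfl, rfl⟩

end LinearInMomenta

/-- Ordinary smooth maps embed into thick morphisms: for `S(x,q) = ⟨q, φ(x)⟩` the
relation `Φ_S` is the cotangent lift of the graph of `φ`, and the nonlinear pullback is
the ordinary pullback `g ↦ g ∘ φ`. -/
theorem ordinary_map_as_thick_morphism {a b : ℕ}
    (φ : EuclideanSpace ℝ (Fin a) → EuclideanSpace ℝ (Fin b)) (hφ : ContDiff ℝ 1 φ)
    (S : EuclideanSpace ℝ (Fin a) × EuclideanSpace ℝ (Fin b) → ℝ)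
    (hS : ∀ x q, S (x, q) = ⟪q, φ x⟫) :
    thickRel S =
      {z : (EuclideanSpace ℝ (Fin b) × EuclideanSpace ℝ (Fin b)) ×
          (EuclideanSpace ℝ (Fin a) × EuclideanSpace ℝ (Fin a)) |
        ∃ (x : EuclideanSpace ℝ (Fin a)) (q : EuclideanSpace ℝ (Fin b)),
          z = ((φ x, q), (x, ContinuousLinearMap.adjoint (fderiv ℝ φ x) q))} ∧
    ∀ (g : EuclideanSpace ℝ (Fin b) → ℝ), Differentiable ℝ g →
      ∀ x : EuclideanSpace ℝ (Fin a),
        -- y := φ(x), q := ∇g(φ(x)) solve the pullback system: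
        gradient g (φ x) = gradient g (φ x) ∧
        φ x = gradq S x (gradient g (φ x)) ∧
        -- and the pullback value is the ordinary pullback g(φ(x)):
        g (φ x) + S (x, gradient g (φ x)) - ⟪gradient g (φ x), φ x⟫ = g (φ x) := by
  refine ⟨thickRel_eq_cotangentLift hS (hφ.differentiable one_ne_zero), fun g _ x =>
    ⟨rfl, (gradq_of_eq_inner hS x _).symm, ?_⟩⟩
  rw [hS, add_sub_cancel_right]
end
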